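/- Let 1 < p < ∞, let φ be a non-negative function with φ ∈ L^1(0,∞), and let 0 < ε < 1. If there is a constant N ≥ 0 such that ‖H_{α,β,φ} f‖_{L^p(ℝ,A_{α,β})} ≤ N · ‖f‖_{L^p(ℝ,A_{α,β})} for every f ∈ L^p(ℝ, A_{α,β}), then N ≥ ε^ε · ∫_0^{1/ε} (φ(t)/t) · t^{1/p+ε} · (inf_{x ∈ ℝ, x ≠ 0} A_{α,β}(x)/A_{α,β}(tx))^{1-1/p} dt. -/

import Mathlib

open MeasureTheory Set ENNReal

/-- The weight `A_{α,β}(x) = (sinh|x|)^{2α+1} (cosh|x|)^{2β+1}`. -/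
noncomputable def Aw (α β : ℝ) (x : ℝ) : ℝ :=
  Real.sinh |x| ^ (2 * α + 1) * Real.cosh |x| ^ (2 * β + 1)

/-- The Hausdorff operator associated with the Opdam–Cherednik transform. -/
noncomputable def Hop (α β : ℝ) (φ f : ℝ → ℝ) (x : ℝ) : ℝ :=
  ∫ t in Set.Ioi (0 : ℝ), (φ t / t) * f (x / t) * (Aw α β (x / t) / Aw α β x)

/-- The `L^p(I, A_{α,β})` norm, as an extended nonnegative real. -/
noncomputable def lpN (α β p : ℝ) (I : Set ℝ) (f : ℝ → ℝ) : ℝ≥0∞ :=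
  (∫⁻ x in I, ENNReal.ofReal (|f x| ^ p * Aw α β x)) ^ (1 / p)

/-!
Test the bound on `f = A^{-1/p} |y|^{-q}` restricted to `1 ≤ |y| ≤ R`, with `q = 1/p + ε`.
Then `|f|^p A = |y|^{-pq}`, so `‖f‖_p^p ≤ 2/(pq - 1)` uniformly in `R`. For `t ∈ (δ, 1/ε)` and
`1/ε ≤ |x| ≤ S`, the point `x/t` lies in the support as soon as `R = S/δ`, and there the integrand
of `H f(x)` is `A(x)^{-1/p} |x|^{-q}` times `φ(t)/t · t^q · (A(x/t)/A(x))^{1-1/p}`, which dominates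
the integrand of the claim. Hence `|H f|^p A ≥ K_δ^p |x|^{-pq}` there, where `K_δ` is the claimed
integral over `(δ, 1/ε)`. Letting `S → ∞` gives `K_δ^p ε^{pε} · 2/(pε) ≤ N^p · 2/(pε)`, and then
`δ → 0`. The truncation at `R` is what makes `H f(x)` a convergent Bochner integral.
-/

section Weight

variable (α β : ℝ)

lemma Aw_nonneg (x : ℝ) : 0 ≤ Aw α β x :=
  mul_nonneg (Real.rpow_nonneg (Real.sinh_nonneg_iff.2 (abs_nonneg x)) _)
    (Real.rpow_nonneg (Real.cosh_pos _).le _)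

lemma Aw_pos {x : ℝ} (hx : x ≠ 0) : 0 < Aw α β x :=
  mul_pos (Real.rpow_pos_of_pos (Real.sinh_pos_iff.2 (abs_pos.2 hx)) _)
    (Real.rpow_pos_of_pos (Real.cosh_pos _) _)

@[fun_prop]
lemma measurable_Aw : Measurable (Aw α β) := by
  unfold Aw
  fun_prop

lemma continuousOn_Aw : ContinuousOn (Aw α β) {0}ᶜ := by
  intro x hx
  have hsinh : Real.sinh |x| ≠ 0 := (Real.sinh_pos_iff.2 (abs_pos.2 hx)).ne'
  unfold Aw
  fun_prop (disch := first | exact Or.inl hsinh | exact Or.inl (Real.cosh_pos _).ne')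

noncomputable def dilationInf (t : ℝ) : ℝ :=
  ⨅ u : {u : ℝ // u ≠ 0}, Aw α β u.1 / Aw α β (t * u.1)

lemma dilationInf_nonneg (t : ℝ) : 0 ≤ dilationInf α β t :=
  Real.iInf_nonneg fun _ => div_nonneg (Aw_nonneg _ _ _) (Aw_nonneg _ _ _)

lemma dilationInf_le (t : ℝ) {u : ℝ} (hu : u ≠ 0) :
    dilationInf α β t ≤ Aw α β u / Aw α β (t * u) :=
  ciInf_le ⟨0, by rintro _ ⟨v, rfl⟩; exact div_nonneg (Aw_nonneg _ _ _) (Aw_nonneg _ _ _)⟩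
    (⟨u, hu⟩ : {u : ℝ // u ≠ 0})

lemma Aw_rpow_mul_abs_rpow_nonneg (p q x : ℝ) : 0 ≤ Aw α β x ^ (-(1 / p)) * |x| ^ (-q) :=
  mul_nonneg (Real.rpow_nonneg (Aw_nonneg α β x) _) (Real.rpow_nonneg (abs_nonneg x) _)

lemma rpow_mul_Aw_eq {p : ℝ} (hp : 0 < p) (q : ℝ) {x : ℝ} (hx : x ≠ 0) :
    (Aw α β x ^ (-(1 / p)) * |x| ^ (-q)) ^ p * Aw α β x = |x| ^ (-(p * q)) := by
  have hA := Aw_pos α β hx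
  rw [Real.mul_rpow (by positivity) (by positivity), ← Real.rpow_mul hA.le,
    ← Real.rpow_mul (abs_nonneg x), neg_mul, one_div_mul_cancel hp.ne', Real.rpow_neg_one]
  field_simp

lemma lpN_univ_rpow {p : ℝ} (hp : p ≠ 0) (f : ℝ → ℝ) :
    lpN α β p univ f ^ p = ∫⁻ x, ENNReal.ofReal (|f x| ^ p * Aw α β x) := by
  rw [lpN, Measure.restrict_univ, ← ENNReal.rpow_mul, one_div_mul_cancel hp, ENNReal.rpow_one]

end Weight

lemma lintegral_abs_rpow_neg {a s : ℝ} (ha : 0 < a) (hs : 1 < s) :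
    ∫⁻ x in abs ⁻¹' Ici a, ENNReal.ofReal (|x| ^ (-s)) =
      ENNReal.ofReal (2 * a ^ (1 - s) / (s - 1)) := by
  set g : ℝ → ℝ≥0∞ := (Ici a).indicator fun x => ENNReal.ofReal (x ^ (-s))
  have hg : Measurable g := Measurable.indicator (by fun_prop) measurableSet_Ici
  have hsplit : (abs ⁻¹' Ici a).indicator (fun x => ENNReal.ofReal (|x| ^ (-s))) =
      fun x => g x + g (-x) := by
    ext x
    rcases le_or_gt 0 x with hx | hx
    · have : ¬ a ≤ -x := by linarith
      simp [g, indicator, abs_of_nonneg hx, this]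
    · have : ¬ a ≤ x := by linarith
      simp [g, indicator, abs_of_neg hx, this]
  have half : ∫⁻ x in Ici a, ENNReal.ofReal (x ^ (-s)) =
      ENNReal.ofReal (a ^ (1 - s) / (s - 1)) := by
    rw [setLIntegral_congr Ioi_ae_eq_Ici.symm, ← ofReal_integral_eq_lintegral_ofReal
      (integrableOn_Ioi_rpow_of_lt (by linarith) ha), integral_Ioi_rpow_of_lt (by linarith) ha]
    · rw [show -s + 1 = 1 - s by ring, ← neg_div_neg_eq, neg_neg, neg_sub]
    · filter_upwards [ae_restrict_mem measurableSet_Ioi] with x hx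
      exact Real.rpow_nonneg (ha.trans hx).le _
  rw [← lintegral_indicator (measurableSet_Ici.preimage continuous_abs.measurable), hsplit,
    lintegral_add_left hg, lintegral_neg_eq_self, ← two_mul,
    lintegral_indicator measurableSet_Ici, half, mul_div_assoc, ENNReal.ofReal_mul zero_le_two,
    ofReal_ofNat]

lemma integrableOn_Hop_integrand {α β : ℝ} {φ f : ℝ → ℝ} (hφ : IntegrableOn φ (Ioi 0))
    (hf : Measurable f) {M : ℝ} (hM : ∀ y, |y * (f y * Aw α β y)| ≤ M) {x : ℝ} (hx : x ≠ 0) :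
    IntegrableOn (fun t => φ t / t * f (x / t) * (Aw α β (x / t) / Aw α β x)) (Ioi 0) := by
  have hA := Aw_pos α β hx
  refine Integrable.mono' (hφ.norm.mul_const (M / (|x| * Aw α β x))) ?_ ?_
  · exact ((hφ.aestronglyMeasurable.div₀ measurable_id.aestronglyMeasurable).mul
      (hf.comp (by fun_prop)).aestronglyMeasurable).mul
      (by fun_prop : Measurable _).aestronglyMeasurable
  · filter_upwards [ae_restrict_mem measurableSet_Ioi] with t ht
    have ht0 : t ≠ 0 := (ne_of_lt ht).symm
    have hrw : φ t / t * f (x / t) * (Aw α β (x / t) / Aw α β x) =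
        φ t * (x / t * (f (x / t) * Aw α β (x / t))) / (x * Aw α β x) := by
      field_simp
    rw [hrw, norm_div, norm_mul, Real.norm_eq_abs (x * _), abs_mul x, abs_of_pos hA,
      mul_div_assoc]
    gcongr
    exact (Real.norm_eq_abs _).trans_le (hM _)

lemma ne_zero_of_mem_annulus {a b y : ℝ} (ha : 0 < a) (hy : y ∈ abs ⁻¹' Icc a b) : y ≠ 0 := by
  rintro rfl
  simp only [mem_preimage, abs_zero, mem_Icc] at hy
  linarith [hy.1]

section TestFunction

variable (α β p q R : ℝ)

noncomputable def testFn : ℝ → ℝ :=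
  (abs ⁻¹' Icc 1 R).indicator fun y => Aw α β y ^ (-(1 / p)) * |y| ^ (-q)

lemma testFn_nonneg (y : ℝ) : 0 ≤ testFn α β p q R y :=
  indicator_nonneg (fun y _ => Aw_rpow_mul_abs_rpow_nonneg α β p q y) y

lemma measurable_testFn : Measurable (testFn α β p q R) :=
  Measurable.indicator (by fun_prop) (measurableSet_Icc.preimage continuous_abs.measurable)

lemma ofReal_testFn_rpow_mul_Aw {p : ℝ} (hp : 0 < p) (y : ℝ) :
    ENNReal.ofReal (|testFn α β p q R y| ^ p * Aw α β y) =
      (abs ⁻¹' Icc 1 R).indicator (fun y => ENNReal.ofReal (|y| ^ (-(p * q)))) y := by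
  by_cases hy : y ∈ abs ⁻¹' Icc 1 R
  · rw [testFn, indicator_of_mem hy, indicator_of_mem hy,
      abs_of_nonneg (Aw_rpow_mul_abs_rpow_nonneg α β p q y),
      rpow_mul_Aw_eq α β hp q (ne_zero_of_mem_annulus one_pos hy)]
  · rw [testFn, indicator_of_notMem hy, indicator_of_notMem hy, abs_zero, Real.zero_rpow hp.ne',
      zero_mul, ofReal_zero]

lemma lpN_testFn_rpow_le {p : ℝ} (hp : 0 < p) (hpq : 1 < p * q) :
    lpN α β p univ (testFn α β p q R) ^ p ≤ ENNReal.ofReal (2 / (p * q - 1)) := by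
  calc lpN α β p univ (testFn α β p q R) ^ p
      = ∫⁻ y in abs ⁻¹' Icc 1 R, ENNReal.ofReal (|y| ^ (-(p * q))) := by
        rw [lpN_univ_rpow α β hp.ne', ← lintegral_indicator
          (measurableSet_Icc.preimage continuous_abs.measurable)]
        simp_rw [ofReal_testFn_rpow_mul_Aw α β q R hp]
    _ ≤ ∫⁻ y in abs ⁻¹' Ici 1, ENNReal.ofReal (|y| ^ (-(p * q))) :=
        lintegral_mono_set (preimage_mono Icc_subset_Ici_self)
    _ = ENNReal.ofReal (2 / (p * q - 1)) := by
        rw [lintegral_abs_rpow_neg one_pos hpq, Real.one_rpow, mul_one]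

lemma exists_bound_mul_testFn_mul_Aw :
    ∃ M, ∀ y, |y * (testFn α β p q R y * Aw α β y)| ≤ M := by
  set K := abs ⁻¹' Icc (1 : ℝ) R
  have hK : IsCompact K := Metric.isCompact_of_isClosed_isBounded
    (isClosed_Icc.preimage continuous_abs)
    (Metric.isBounded_closedBall (x := 0) (r := R) |>.subset fun y hy => by
      simpa only [Metric.mem_closedBall, dist_zero_right, Real.norm_eq_abs] using hy.2)
  have hA : ContinuousOn (Aw α β) K :=
    (continuousOn_Aw α β).mono fun y hy => ne_zero_of_mem_annulus one_pos hy
  have hcont : ContinuousOn (fun y => y * (Aw α β y ^ (-(1 / p)) * |y| ^ (-q) * Aw α β y)) K :=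
    continuousOn_id.mul (((hA.rpow_const fun y hy =>
      Or.inl (Aw_pos α β (ne_zero_of_mem_annulus one_pos hy)).ne').mul
      (continuous_abs.continuousOn.rpow_const fun y hy =>
        Or.inl (abs_ne_zero.2 (ne_zero_of_mem_annulus one_pos hy)))).mul hA)
  obtain ⟨M, hM⟩ := hK.exists_bound_of_continuousOn hcont
  refine ⟨max M 0, fun y => ?_⟩
  by_cases hy : y ∈ K
  · rw [testFn, indicator_of_mem hy]
    exact (hM y hy).trans (le_max_left _ _)
  · rw [testFn, indicator_of_notMem hy, zero_mul, mul_zero, abs_zero]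
    exact le_max_right _ _

end TestFunction

section Hausdorff

variable {α β p q R : ℝ} {φ : ℝ → ℝ}

lemma testFn_mul_Aw_div_eq {x t : ℝ} (hx : x ≠ 0) (ht : 0 < t)
    (hxt : x / t ∈ abs ⁻¹' Icc 1 R) :
    testFn α β p q R (x / t) * (Aw α β (x / t) / Aw α β x) =
      Aw α β x ^ (-(1 / p)) * |x| ^ (-q) *
        (t ^ q * (Aw α β (x / t) / Aw α β x) ^ (1 - 1 / p)) := by
  have hA := Aw_pos α β hx
  have hAt := Aw_pos α β (div_ne_zero hx ht.ne')
  rw [testFn, indicator_of_mem hxt, abs_div, abs_of_pos ht, Real.div_rpow (abs_nonneg x) ht.le,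
    Real.rpow_neg ht.le q, Real.div_rpow hAt.le hA.le, Real.rpow_sub hAt, Real.rpow_sub hA,
    Real.rpow_neg hAt.le, Real.rpow_neg hA.le, Real.rpow_one, Real.rpow_one]
  have hA' := Real.rpow_pos_of_pos hA (1 / p)
  have hAt' := Real.rpow_pos_of_pos hAt (1 / p)
  field_simp

lemma mul_dilationInf_le_Hop_integrand (hp : 1 ≤ p) {x t : ℝ} (hφ0 : 0 ≤ φ t) (hx : x ≠ 0)
    (ht : 0 < t) (hxt : x / t ∈ abs ⁻¹' Icc 1 R) :
    Aw α β x ^ (-(1 / p)) * |x| ^ (-q) * (φ t / t * t ^ q * dilationInf α β t ^ (1 - 1 / p)) ≤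
      φ t / t * testFn α β p q R (x / t) * (Aw α β (x / t) / Aw α β x) := by
  have hinf : dilationInf α β t ≤ Aw α β (x / t) / Aw α β x := by
    simpa only [mul_div_cancel₀ x ht.ne'] using dilationInf_le α β t (div_ne_zero hx ht.ne')
  have hexp : 0 ≤ 1 - 1 / p := by
    rw [sub_nonneg, div_le_one (by linarith)]
    exact hp
  have hcoef := Aw_rpow_mul_abs_rpow_nonneg α β p q x
  rw [mul_assoc (φ t / t) (testFn α β p q R (x / t)), testFn_mul_Aw_div_eq hx ht hxt]
  calc Aw α β x ^ (-(1 / p)) * |x| ^ (-q) * (φ t / t * t ^ q * dilationInf α β t ^ (1 - 1 / p))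
      = φ t / t * (Aw α β x ^ (-(1 / p)) * |x| ^ (-q) *
          (t ^ q * dilationInf α β t ^ (1 - 1 / p))) := by ring
    _ ≤ φ t / t * (Aw α β x ^ (-(1 / p)) * |x| ^ (-q) *
          (t ^ q * (Aw α β (x / t) / Aw α β x) ^ (1 - 1 / p))) := by
        refine mul_le_mul_of_nonneg_left (mul_le_mul_of_nonneg_left
          (mul_le_mul_of_nonneg_left ?_ (Real.rpow_nonneg ht.le q)) hcoef) (div_nonneg hφ0 ht.le)
        exact Real.rpow_le_rpow (dilationInf_nonneg α β t) hinf hexp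

lemma ofReal_mul_lintegral_le_Hop_testFn (hp : 1 ≤ p) (hφ0 : ∀ t, 0 ≤ φ t)
    (hφ : IntegrableOn φ (Ioi 0)) {x : ℝ} (hx : x ≠ 0) {T : Set ℝ} (hT : MeasurableSet T)
    (hT0 : T ⊆ Ioi 0) (hTx : ∀ t ∈ T, x / t ∈ abs ⁻¹' Icc 1 R) :
    ENNReal.ofReal (Aw α β x ^ (-(1 / p)) * |x| ^ (-q)) *
        ∫⁻ t in T, ENNReal.ofReal (φ t / t * t ^ q * dilationInf α β t ^ (1 - 1 / p)) ≤
      ENNReal.ofReal (Hop α β φ (testFn α β p q R) x) := by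
  obtain ⟨M, hM⟩ := exists_bound_mul_testFn_mul_Aw α β p q R
  have hint := integrableOn_Hop_integrand hφ (measurable_testFn α β p q R) hM hx
  have hnonneg : ∀ᵐ t ∂volume.restrict (Ioi 0),
      0 ≤ φ t / t * testFn α β p q R (x / t) * (Aw α β (x / t) / Aw α β x) := by
    filter_upwards [ae_restrict_mem measurableSet_Ioi] with t (ht : 0 < t)
    exact mul_nonneg (mul_nonneg (div_nonneg (hφ0 t) ht.le) (testFn_nonneg α β p q R _))
      (div_nonneg (Aw_nonneg α β _) (Aw_nonneg α β x))
  have hcoef := Aw_rpow_mul_abs_rpow_nonneg α β p q x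
  rw [Hop, ofReal_integral_eq_lintegral_ofReal hint hnonneg,
    ← lintegral_const_mul' _ _ ofReal_ne_top]
  calc ∫⁻ t in T, ENNReal.ofReal (Aw α β x ^ (-(1 / p)) * |x| ^ (-q)) *
        ENNReal.ofReal (φ t / t * t ^ q * dilationInf α β t ^ (1 - 1 / p))
      ≤ ∫⁻ t in T, ENNReal.ofReal
          (φ t / t * testFn α β p q R (x / t) * (Aw α β (x / t) / Aw α β x)) :=
        setLIntegral_mono' hT fun t ht => by
          rw [← ofReal_mul hcoef]
          exact ofReal_le_ofReal
            (mul_dilationInf_le_Hop_integrand hp (hφ0 t) hx (hT0 ht) (hTx t ht))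
    _ ≤ _ := lintegral_mono_set hT0

end Hausdorff

def LpBoundedBy (α β p : ℝ) (T : (ℝ → ℝ) → ℝ → ℝ) (N : ℝ) : Prop :=
  ∀ f : ℝ → ℝ, Measurable f → lpN α β p univ f < ⊤ →
    lpN α β p univ (T f) ≤ ENNReal.ofReal N * lpN α β p univ f

section LowerBound

variable {α β p q N a : ℝ} {φ : ℝ → ℝ}

lemma lintegral_Ioo_rpow_mul_le_Hop_testFn (hp : 1 ≤ p) (hφ0 : ∀ t, 0 ≤ φ t)
    (hφ : IntegrableOn φ (Ioi 0)) (ha : 0 < a) {δ S x : ℝ} (hδ : 0 < δ)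
    (hx : x ∈ abs ⁻¹' Icc a S) :
    (∫⁻ t in Ioo δ a, ENNReal.ofReal (φ t / t * t ^ q * dilationInf α β t ^ (1 - 1 / p))) ^ p *
        ENNReal.ofReal (|x| ^ (-(p * q))) ≤
      ENNReal.ofReal (|Hop α β φ (testFn α β p q (S / δ)) x| ^ p * Aw α β x) := by
  have hp0 : 0 < p := by linarith
  have hx0 : x ≠ 0 := ne_zero_of_mem_annulus ha hx
  have hTx : ∀ t ∈ Ioo δ a, x / t ∈ abs ⁻¹' Icc 1 (S / δ) := by
    rintro t ⟨hδt, hta⟩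
    have ht : 0 < t := hδ.trans hδt
    rw [mem_preimage, abs_div, abs_of_pos ht, mem_Icc, one_le_div ht]
    exact ⟨hta.le.trans hx.1, div_le_div₀ (ha.le.trans (hx.1.trans hx.2)) hx.2 hδ hδt.le⟩
  have hHop := ofReal_mul_lintegral_le_Hop_testFn (α := α) (β := β) (q := q) hp hφ0 hφ hx0
    measurableSet_Ioo (fun t ht => hδ.trans ht.1) hTx
  set K := ∫⁻ t in Ioo δ a, ENNReal.ofReal (φ t / t * t ^ q * dilationInf α β t ^ (1 - 1 / p))
  set c := Aw α β x ^ (-(1 / p)) * |x| ^ (-q)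
  have hc : 0 ≤ c := Aw_rpow_mul_abs_rpow_nonneg α β p q x
  calc K ^ p * ENNReal.ofReal (|x| ^ (-(p * q)))
      = (ENNReal.ofReal c * K) ^ p * ENNReal.ofReal (Aw α β x) := by
        rw [← rpow_mul_Aw_eq α β hp0 q hx0, ENNReal.ofReal_mul (Real.rpow_nonneg hc p),
          ← ofReal_rpow_of_nonneg hc hp0.le, mul_rpow_of_nonneg _ _ hp0.le]
        ring
    _ ≤ ENNReal.ofReal |Hop α β φ (testFn α β p q (S / δ)) x| ^ p *
          ENNReal.ofReal (Aw α β x) := by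
        gcongr
        exact hHop.trans (ofReal_le_ofReal (le_abs_self _))
    _ = _ := by
        rw [ofReal_rpow_of_nonneg (abs_nonneg _) hp0.le,
          ← ENNReal.ofReal_mul (Real.rpow_nonneg (abs_nonneg _) p)]

lemma lintegral_Ioo_rpow_mul_lintegral_annulus_le (hp : 1 < p) (hpq : 1 < p * q)
    (hφ0 : ∀ t, 0 ≤ φ t) (hφ : IntegrableOn φ (Ioi 0)) (hbdd : LpBoundedBy α β p (Hop α β φ) N)
    (ha : 0 < a) {δ : ℝ} (hδ : 0 < δ) (S : ℝ) :
    (∫⁻ t in Ioo δ a, ENNReal.ofReal (φ t / t * t ^ q * dilationInf α β t ^ (1 - 1 / p))) ^ p *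
        ∫⁻ x in abs ⁻¹' Icc a S, ENNReal.ofReal (|x| ^ (-(p * q))) ≤
      ENNReal.ofReal N ^ p * ENNReal.ofReal (2 / (p * q - 1)) := by
  have hp0 : 0 < p := by linarith
  set f := testFn α β p q (S / δ)
  have hf : lpN α β p univ f ^ p ≤ ENNReal.ofReal (2 / (p * q - 1)) :=
    lpN_testFn_rpow_le α β q (S / δ) hp0 hpq
  have hf_lt_top : lpN α β p univ f < ⊤ :=
    (ENNReal.rpow_lt_top_iff_of_pos hp0).1 (hf.trans_lt ofReal_lt_top)
  rw [← lintegral_const_mul _ (by fun_prop)]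
  calc _ ≤ ∫⁻ x in abs ⁻¹' Icc a S, ENNReal.ofReal (|Hop α β φ f x| ^ p * Aw α β x) :=
        setLIntegral_mono' (measurableSet_Icc.preimage continuous_abs.measurable) fun x hx =>
          lintegral_Ioo_rpow_mul_le_Hop_testFn hp.le hφ0 hφ ha hδ hx
    _ ≤ ∫⁻ x, ENNReal.ofReal (|Hop α β φ f x| ^ p * Aw α β x) := setLIntegral_le_lintegral _ _
    _ = lpN α β p univ (Hop α β φ f) ^ p := (lpN_univ_rpow α β hp0.ne' _).symm
    _ ≤ (ENNReal.ofReal N * lpN α β p univ f) ^ p :=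
        ENNReal.rpow_le_rpow (hbdd f (measurable_testFn α β p q (S / δ)) hf_lt_top) hp0.le
    _ ≤ _ := by
        rw [mul_rpow_of_nonneg _ _ hp0.le]
        gcongr

lemma lintegral_Ioo_rpow_mul_rpow_le (hp : 1 < p) (hpq : 1 < p * q)
    (hφ0 : ∀ t, 0 ≤ φ t) (hφ : IntegrableOn φ (Ioi 0)) (hbdd : LpBoundedBy α β p (Hop α β φ) N)
    (ha : 0 < a) {δ : ℝ} (hδ : 0 < δ) :
    (∫⁻ t in Ioo δ a, ENNReal.ofReal (φ t / t * t ^ q * dilationInf α β t ^ (1 - 1 / p))) ^ p *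
        ENNReal.ofReal (a ^ (1 - p * q)) ≤ ENNReal.ofReal N ^ p := by
  have hU : abs ⁻¹' Ici a = ⋃ n : ℕ, abs ⁻¹' Icc a n := by
    ext x
    simp only [mem_preimage, mem_Ici, mem_iUnion, mem_Icc]
    exact ⟨fun h => (exists_nat_ge |x|).imp fun _ hn => ⟨h, hn⟩, fun ⟨_, h, _⟩ => h⟩
  have hmono : Monotone fun n : ℕ => abs ⁻¹' Icc a (n : ℝ) := fun m n hmn =>
    preimage_mono (Icc_subset_Icc_right (Nat.cast_le.2 hmn))
  have h := iSup_le fun n : ℕ =>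
    lintegral_Ioo_rpow_mul_lintegral_annulus_le hp hpq hφ0 hφ hbdd ha hδ (n : ℝ)
  rw [← ENNReal.mul_iSup, ← setLIntegral_iUnion_of_directed _ hmono.directed_le, ← hU,
    lintegral_abs_rpow_neg ha hpq, mul_comm 2, mul_div_assoc,
    ENNReal.ofReal_mul (Real.rpow_nonneg ha.le _), ← mul_assoc] at h
  have hpq' : 0 < 2 / (p * q - 1) := div_pos two_pos (sub_pos.2 hpq)
  exact (ENNReal.mul_le_mul_iff_left (ofReal_pos.2 hpq').ne' ofReal_ne_top).1 h

lemma ofReal_rpow_mul_lintegral_Ioo_zero_le (hp : 1 < p) (hpq : 1 < p * q)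
    (hφ0 : ∀ t, 0 ≤ φ t) (hφ : IntegrableOn φ (Ioi 0)) (hbdd : LpBoundedBy α β p (Hop α β φ) N)
    (ha : 0 < a) :
    ENNReal.ofReal (a ^ (1 / p - q)) *
        ∫⁻ t in Ioo 0 a, ENNReal.ofReal (φ t / t * t ^ q * dilationInf α β t ^ (1 - 1 / p)) ≤
      ENNReal.ofReal N := by
  have hp0 : 0 < p := by linarith
  have hU : Ioo 0 a = ⋃ n : ℕ, Ioo (1 / ((n : ℝ) + 1)) a := by
    ext t
    simp only [mem_Ioo, mem_iUnion]
    refine ⟨fun ⟨ht, hta⟩ => (exists_nat_one_div_lt ht).imp fun _ hn => ⟨hn, hta⟩, ?_⟩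
    rintro ⟨n, hn, hta⟩
    exact ⟨(Nat.one_div_pos_of_nat).trans hn, hta⟩
  have hmono : Monotone fun n : ℕ => Ioo (1 / ((n : ℝ) + 1)) a := fun m n hmn =>
    Ioo_subset_Ioo_left (one_div_le_one_div_of_le (by positivity) (by gcongr))
  rw [hU, setLIntegral_iUnion_of_directed _ hmono.directed_le, ENNReal.mul_iSup]
  refine iSup_le fun n => ?_
  rw [← ENNReal.rpow_le_rpow_iff hp0, mul_rpow_of_nonneg _ _ hp0.le,
    ofReal_rpow_of_nonneg (Real.rpow_nonneg ha.le _) hp0.le, ← Real.rpow_mul ha.le,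
    show (1 / p - q) * p = 1 - p * q by field_simp, mul_comm]
  exact lintegral_Ioo_rpow_mul_rpow_le hp hpq hφ0 hφ hbdd ha Nat.one_div_pos_of_nat

end LowerBound

theorem hausdorff_Lp_lower_bound_eps_general (α β : ℝ)
    (p : ℝ) (hp : 1 < p)
    (φ : ℝ → ℝ) (hφpos : ∀ t, 0 ≤ φ t) (hφint : IntegrableOn φ (Set.Ioi 0))
    (ε : ℝ) (hε0 : 0 < ε)
    (N : ℝ)
    (hbdd : ∀ f : ℝ → ℝ, Measurable f → lpN α β p Set.univ f < ⊤ →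
      lpN α β p Set.univ (Hop α β φ f) ≤ ENNReal.ofReal N * lpN α β p Set.univ f) :
    ENNReal.ofReal (ε ^ ε) *
      ∫⁻ t in Set.Ioo (0 : ℝ) (1/ε), ENNReal.ofReal
        ((φ t / t) * t ^ (1/p + ε) *
          (⨅ u : {u : ℝ // u ≠ 0}, Aw α β u.1 / Aw α β (t * u.1)) ^ (1 - 1/p)) ≤
      ENNReal.ofReal N := by
  have hpq : 1 < p * (1 / p + ε) := by
    rw [mul_add, mul_one_div_cancel (by linarith)]
    linarith [mul_pos (by linarith : 0 < p) hε0]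
  have hεε : (1 / ε) ^ (1 / p - (1 / p + ε)) = ε ^ ε := by
    rw [show 1 / p - (1 / p + ε) = -ε by ring, one_div, Real.inv_rpow hε0.le,
      Real.rpow_neg hε0.le, inv_inv]
  have h := ofReal_rpow_mul_lintegral_Ioo_zero_le hp hpq hφpos hφint hbdd (one_div_pos.2 hε0)
  rw [hεε] at h
  exact h

/-- Lower bound for the operator norm of the Hausdorff operator on `L^p(ℝ, A_{α,β})` in
terms of the truncated integral at level `ε`. -/
theorem hausdorff_Lp_lower_bound_eps (α β : ℝ) (hβα : β ≤ α) (hβ : -(1/2 : ℝ) ≤ β)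
    (hα : -(1/2 : ℝ) < α)
    (p : ℝ) (hp : 1 < p)
    (φ : ℝ → ℝ) (hφpos : ∀ t, 0 ≤ φ t) (hφint : IntegrableOn φ (Set.Ioi 0))
    (ε : ℝ) (hε0 : 0 < ε) (hε1 : ε < 1)
    (N : ℝ) (hN : 0 ≤ N)
    (hbdd : ∀ f : ℝ → ℝ, Measurable f → lpN α β p Set.univ f < ⊤ →
      lpN α β p Set.univ (Hop α β φ f) ≤ ENNReal.ofReal N * lpN α β p Set.univ f) :
    ENNReal.ofReal (ε ^ ε) *
      ∫⁻ t in Set.Ioo (0 : ℝ) (1/ε), ENNReal.ofReal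
        ((φ t / t) * t ^ (1/p + ε) *
          (⨅ u : {u : ℝ // u ≠ 0}, Aw α β u.1 / Aw α β (t * u.1)) ^ (1 - 1/p)) ≤
      ENNReal.ofReal N :=
  hausdorff_Lp_lower_bound_eps_general α β p hp φ hφpos hφint ε hε0 N hbdd
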